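/- arXiv:0911.3766 — 3 statements merged into one kernel-verified Lean document; each statement's English description precedes it below -/
import Mathlib

section
/- Let K be a commutative ring and let d be a unit of K. The K-linear map K[x,y,z] × K[x,y,z] → K[x,y,z] sending a pair (f, g) to f(x²-1, y²-1, z²-1) + g(x²-1, y²-1, z²-1)·(x·y·z - d⁻¹·x² - d⁻¹·y² + d⁻¹) is injective; that is, if f(x²-1, y²-1, z²-1) + g(x²-1, y²-1, z²-1)·(xyz - d⁻¹x² - d⁻¹y² + d⁻¹) = 0 in K[x,y,z], then f = 0 and g = 0. -/
/-!
Write `Φ = expand 2 ∘ ψ` with `ψ : X i ↦ X i - 1` an automorphism, so `Φ` is injective and the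
relation reads `expand 2 (f' - c X₀ g' - c X₁ g' + c g') + expand 2 g' · X₀X₁X₂ = 0` with
`c = d⁻¹`, `f' = ψ f`, `g' = ψ g`. Every monomial of the first summand has even `X₀`-exponent and every
monomial of the second an odd one, so both vanish. Comparing coefficients, rather than
substituting `X₀ ↦ -X₀`, keeps the argument valid when `2` is not invertible.
-/

open MvPolynomial

namespace MvPolynomial

variable {R σ : Type*}

theorem aeval_X_sub_C_injective [CommRing R] (a : σ → R) :
    Function.Injective (aeval fun i ↦ X i - C (a i) : MvPolynomial σ R →ₐ[R] _) := by
  refine Function.LeftInverse.injective (g := aeval fun i ↦ X i + C (a i)) fun p ↦ ?_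
  rw [← AlgHom.comp_apply, comp_aeval]
  convert aeval_X_left_apply p
  simp

theorem aeval_X_pow_sub_C [CommRing R] (p : ℕ) (a : σ → R) (φ : MvPolynomial σ R) :
    aeval (fun i ↦ X i ^ p - C (a i)) φ = expand p (aeval (fun i ↦ X i - C (a i)) φ) := by
  rw [← AlgHom.comp_apply, comp_aeval]
  simp

theorem eq_zero_of_expand_add_expand_mul_monomial_eq_zero [CommSemiring R] {p : ℕ} (hp : p ≠ 0)
    {s : σ →₀ ℕ} {i : σ} (hs : ¬ p ∣ s i) {φ ψ : MvPolynomial σ R}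
    (h : expand p φ + expand p ψ * monomial s 1 = 0) : φ = 0 ∧ ψ = 0 := by
  have hψ : ψ = 0 := by
    ext m
    have hcoeff := congr_arg (coeff (p • m + s)) h
    have hodd : ¬ p ∣ (p • m + s) i := by simpa [Nat.dvd_add_right (dvd_mul_right p (m i))]
    rwa [coeff_add, coeff_expand_of_not_dvd _ hodd, coeff_mul_monomial, coeff_expand_smul _ hp,
      mul_one, zero_add] at hcoeff
  subst hψ
  refine ⟨(expand_injective (Nat.pos_of_ne_zero hp)).eq_iff' (map_zero _) |>.mp ?_, rfl⟩
  simpa using h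

end MvPolynomial

/-- Injectivity of `Φ` on normal forms `f + g·t`: if
`f(x²-1, y²-1, z²-1) + g(x²-1, y²-1, z²-1)·(xyz - d⁻¹x² - d⁻¹y² + d⁻¹) = 0` in `K[x,y,z]`,
then `f = 0` and `g = 0`. -/
theorem stmt4 (K : Type*) [CommRing K] (d : Kˣ)
    (f g : MvPolynomial (Fin 3) K)
    (h : aeval
        ![(MvPolynomial.X 0 : MvPolynomial (Fin 3) K) ^ 2 - 1,
          (MvPolynomial.X 1) ^ 2 - 1,
          (MvPolynomial.X 2) ^ 2 - 1] f
      + aeval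
        ![(MvPolynomial.X 0 : MvPolynomial (Fin 3) K) ^ 2 - 1,
          (MvPolynomial.X 1) ^ 2 - 1,
          (MvPolynomial.X 2) ^ 2 - 1] g
        * ((MvPolynomial.X 0) * (MvPolynomial.X 1) * (MvPolynomial.X 2)
            - C ((d⁻¹ : Kˣ) : K) * (MvPolynomial.X 0) ^ 2
            - C ((d⁻¹ : Kˣ) : K) * (MvPolynomial.X 1) ^ 2
            + C ((d⁻¹ : Kˣ) : K)) = 0) :
    f = 0 ∧ g = 0 := by
  set c : K := ((d⁻¹ : Kˣ) : K)
  set ψ : MvPolynomial (Fin 3) K →ₐ[K] MvPolynomial (Fin 3) K := aeval fun i ↦ X i - C 1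
  have hΦ : ![(X 0 : MvPolynomial (Fin 3) K) ^ 2 - 1, X 1 ^ 2 - 1, X 2 ^ 2 - 1]
      = fun i ↦ X i ^ 2 - C 1 := by
    funext i; fin_cases i <;> simp
  have hxyz : (X 0 * X 1 * X 2 : MvPolynomial (Fin 3) K)
      = monomial (Finsupp.single 0 1 + Finsupp.single 1 1 + Finsupp.single 2 1) 1 := by
    simp only [X, monomial_mul, mul_one]
  rw [hΦ, aeval_X_pow_sub_C, aeval_X_pow_sub_C] at h
  have hsplit : expand 2 (ψ f - C c * X 0 * ψ g - C c * X 1 * ψ g + C c * ψ g)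
      + expand 2 (ψ g) * monomial (Finsupp.single 0 1 + Finsupp.single 1 1 + Finsupp.single 2 1) 1
      = 0 := by
    rw [← hxyz, ← h]
    simp only [map_add, map_sub, map_mul, expand_C, expand_X]
    ring
  obtain ⟨hf', hg'⟩ :=
    eq_zero_of_expand_add_expand_mul_monomial_eq_zero two_ne_zero (i := 0) (by simp) hsplit
  have hψinj := (injective_iff_map_eq_zero ψ).mp (aeval_X_sub_C_injective fun _ ↦ 1)
  refine ⟨hψinj f ?_, hψinj g hg'⟩
  simpa [hg'] using hf'
end

section
/- Let S be a commutative ring, let d be a unit of S, and let p ≥ 1 and k ≥ 1 be natural numbers. Then d^(p-1) - 1 divides (d - d⁻¹)^(k·p - 1)·(d² - 1) - ((d - d⁻¹)^(k - 1)·(d² - 1))^p in S. -/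
/-- For a unit `d` and `p, k ≥ 1`, the element `d^(p-1) - 1` divides
`(d - d⁻¹)^(kp - 1)·(d² - 1) - ((d - d⁻¹)^(k - 1)·(d² - 1))^p`. -/
theorem stmt8 (S : Type*) [CommRing S] (d : Sˣ) (p k : ℕ) (hp : 1 ≤ p) (hk : 1 ≤ k) :
    ((d : S) ^ (p - 1) - 1) ∣
      ((d : S) - ((d⁻¹ : Sˣ) : S)) ^ (k * p - 1) * ((d : S) ^ 2 - 1)
        - (((d : S) - ((d⁻¹ : Sˣ) : S)) ^ (k - 1) * ((d : S) ^ 2 - 1)) ^ p := by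
  obtain ⟨m, rfl⟩ := Nat.exists_eq_add_of_le hp
  obtain ⟨l, rfl⟩ := Nat.exists_eq_add_of_le hk
  set e : S := ((d⁻¹ : Sˣ) : S) with he_def
  have he : (d : S) * e = 1 := d.mul_inv
  have h1 : (d : S) - e = e * ((d : S) ^ 2 - 1) := by linear_combination (-(d : S)) * he
  have hme : e ^ m * (d : S) ^ m = 1 := by
    rw [← mul_pow, mul_comm, he, one_pow]
  have hkp : (1 + l) * (1 + m) - 1 = l * m + l + m := by ring_nf; omega
  have hk1 : 1 + l - 1 = l := by omega
  have hp1 : 1 + m - 1 = m := by omega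
  rw [hkp, hk1, hp1, h1]
  refine ⟨-(e ^ (l * m + l + m) * ((d : S) ^ 2 - 1) ^ (l * m + l + m + 1)), ?_⟩
  simp only [mul_pow]
  linear_combination (e ^ (l * m + l) * ((d : S) ^ 2 - 1) ^ (l * m + l + m + 1)) * hme
end

section
/- Let L = ℤ[A, A⁻¹] be the ring of Laurent polynomials over ℤ, and let R be the localization of L away from the element A⁴ + 1 (so that d = -A² - A⁻² = -A⁻²(A⁴ + 1) is invertible in R). Let P = -A⁻³⁴ - 6A⁻³⁰ - 15A⁻²⁶ - 35A⁻²² - 65A⁻¹⁸ - 66A⁻¹⁴ - 36A⁻¹⁰ - 15A⁻⁶ - 5A⁻² + 10A⁶ + 35A¹⁰ + 61A¹⁴ + 66A¹⁸ + 40A²² + 15A²⁶ + 10A³⁰ + 6A³⁴ + A³⁸ and let P* = -A³⁴ - 6A³⁰ - 15A²⁶ - 35A²² - 65A¹⁸ - 66A¹⁴ - 36A¹⁰ - 15A⁶ - 5A² + 10A⁻⁶ + 35A⁻¹⁰ + 61A⁻¹⁴ + 66A⁻¹⁸ + 40A⁻²² + 15A⁻²⁶ + 10A⁻³⁰ + 6A⁻³⁴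 + A⁻³⁸ (the polynomial obtained from P by the substitution A ↦ A⁻¹). Then the image of P - P* in R does not belong to the ideal of R generated by 5 and A⁴⁰ - 1. -/
/-!
Evaluate at `A = 1 + ε` in the dual numbers over `𝔽₅`. This reads off `f(1) + f'(1) ε`, so it
kills `5` and `A⁴⁰ - 1` (as `40 ≡ 0 mod 5`), inverts `A⁴ + 1 ↦ 2 + 4ε`, and therefore factors
through the localization and the quotient by the ideal. On the other hand `P(1) = 0` and
`P'(1) = 2¹³`, while `P*` has `P*(1) = 0` and `P*'(1) = -2¹³`, so `P - P*` is sent to `2¹⁴ ε ≠ 0`.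
No field of characteristic `5` works instead: there the image of `A` has order dividing `8`, and
`A⁴ + 1 ≠ 0` forces `A⁴ = 1`, whence `P(A) = A² P(1) = 0` and likewise `P*(A) = 0`.
-/

open LaurentPolynomial DualNumber

@[simps]
def Units.oneAddOfMulSelfEqZero {S : Type*} [CommRing S] {e : S} (he : e * e = 0) : Sˣ where
  val := 1 + e
  inv := 1 - e
  val_inv := by linear_combination (-1 : S) * he
  inv_val := by linear_combination (-1 : S) * he

theorem Units.val_oneAddOfMulSelfEqZero_zpow {S : Type*} [CommRing S] {e : S} (he : e * e = 0)
    (n : ℤ) : ((oneAddOfMulSelfEqZero he ^ n : Sˣ) : S) = 1 + n * e := by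
  induction n using Int.induction_on with
  | zero => simp
  | succ n ih =>
    rw [zpow_add_one, val_mul, ih, val_oneAddOfMulSelfEqZero]
    push_cast
    linear_combination (n : S) * he
  | pred n ih =>
    rw [zpow_sub_one, val_mul, ih, val_inv_oneAddOfMulSelfEqZero]
    push_cast
    linear_combination (n : S) * he

namespace DualNumber

instance charP (R : Type*) [CommSemiring R] (p : ℕ) [CharP R p] : CharP R[ε] p :=
  charP_of_injective_algebraMap TrivSqZeroExt.inl_injective p

theorem mul_eps_eq_zero_iff {R : Type*} [Semiring R] (x : R[ε]) : x * ε = 0 ↔ x.fst = 0 := by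
  constructor
  · intro h
    simpa using congrArg TrivSqZeroExt.snd h
  · intro h
    ext <;> simp [h]

end DualNumber

namespace LaurentPolynomial

noncomputable def evalOneAddEps (R : Type*) [CommRing R] : ℤ[T;T⁻¹] →+* R[ε] :=
  eval₂ (Int.castRingHom R[ε]) (Units.oneAddOfMulSelfEqZero eps_mul_eps)

theorem evalOneAddEps_T (R : Type*) [CommRing R] (n : ℤ) :
    evalOneAddEps R (T n) = 1 + (n : R[ε]) * ε := by
  rw [evalOneAddEps, eval₂_T, Units.val_oneAddOfMulSelfEqZero_zpow]

end LaurentPolynomial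

theorem Ideal.notMem_span_of_map_eq_zero {R S : Type*} [CommSemiring R] [Semiring S]
    (f : R →+* S) {s : Set R} (hs : ∀ a ∈ s, f a = 0) {x : R} (hx : f x ≠ 0) :
    x ∉ Ideal.span s :=
  fun hmem => hx (Ideal.span_le.mpr (fun a ha => RingHom.mem_ker.mpr (hs a ha)) hmem)

theorem isUnit_evalOneAddEps_T_four_add_one : IsUnit (evalOneAddEps (ZMod 5) (T 4 + 1)) := by
  rw [map_add, map_one, evalOneAddEps_T, TrivSqZeroExt.isUnit_iff_isUnit_fst]
  simp only [TrivSqZeroExt.fst_add, TrivSqZeroExt.fst_one, TrivSqZeroExt.fst_mul, fst_eps,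
    mul_zero, add_zero]
  exact IsUnit.of_mul_eq_one 3 (by decide)

theorem evalOneAddEps_T_forty_sub_one : evalOneAddEps (ZMod 5) (T 40 - 1) = 0 := by
  rw [map_sub, map_one, evalOneAddEps_T, (CharP.intCast_eq_zero_iff _ 5 40).mpr (by norm_num),
    zero_mul, add_sub_cancel_left]

/-- The Yamada polynomial `P` of the given embedding of the Petersen graph is not congruent
to `P* = P(A⁻¹)` modulo `5` and `A⁴⁰ - 1` in `R`, the localization of `ℤ[A, A⁻¹]` away from
`A⁴ + 1` (so that `d = -A² - A⁻²` is invertible). Here `T n` denotes `Aⁿ`. -/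
theorem stmt9
    (P Pstar : LaurentPolynomial ℤ)
    (hP : P = -T (-34) - 6 * T (-30) - 15 * T (-26) - 35 * T (-22) - 65 * T (-18)
      - 66 * T (-14) - 36 * T (-10) - 15 * T (-6) - 5 * T (-2)
      + 10 * T 6 + 35 * T 10 + 61 * T 14 + 66 * T 18 + 40 * T 22
      + 15 * T 26 + 10 * T 30 + 6 * T 34 + T 38)
    (hPstar : Pstar = -T 34 - 6 * T 30 - 15 * T 26 - 35 * T 22 - 65 * T 18
      - 66 * T 14 - 36 * T 10 - 15 * T 6 - 5 * T 2
      + 10 * T (-6) + 35 * T (-10) + 61 * T (-14) + 66 * T (-18) + 40 * T (-22)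
      + 15 * T (-26) + 10 * T (-30) + 6 * T (-34) + T (-38)) :
    algebraMap (LaurentPolynomial ℤ)
        (Localization.Away ((T 4 + 1 : LaurentPolynomial ℤ))) (P - Pstar) ∉
      Ideal.span ({(5 : Localization.Away ((T 4 + 1 : LaurentPolynomial ℤ))),
        algebraMap (LaurentPolynomial ℤ)
          (Localization.Away ((T 4 + 1 : LaurentPolynomial ℤ))) (T 40 - 1)} :
            Set (Localization.Away ((T 4 + 1 : LaurentPolynomial ℤ)))) := by
  have hdiff : evalOneAddEps (ZMod 5) (P - Pstar) = ((16384 : ℕ) : (ZMod 5)[ε]) * ε := by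
    subst hP hPstar
    simp only [map_add, map_sub, map_neg, map_mul, map_ofNat, evalOneAddEps_T]
    push_cast
    ring
  let ψ := IsLocalization.Away.lift (S := Localization.Away (T 4 + 1 : ℤ[T;T⁻¹])) (T 4 + 1)
    isUnit_evalOneAddEps_T_four_add_one
  have hψ (f : ℤ[T;T⁻¹]) : ψ (algebraMap _ _ f) = evalOneAddEps (ZMod 5) f :=
    IsLocalization.Away.lift_eq _ _ f
  refine Ideal.notMem_span_of_map_eq_zero ψ ?_ ?_
  · rintro a (rfl | rfl)
    · rw [map_ofNat, CharP.ofNat_eq_zero (ZMod 5)[ε] 5]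
    · rw [hψ, evalOneAddEps_T_forty_sub_one]
  · rw [hψ, hdiff, Ne, mul_eps_eq_zero_iff, TrivSqZeroExt.fst_natCast]
    decide
end
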